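/- For any field K of characteristic different from 2, the 2m×2m matrices X₁₁ = ±[[0,I],[0,0]], X₁₂ = ±[[I,0],[0,0]], X₂₁ = ±[[0,0],[0,I]], X₂₂ = ±[[0,0],[I,0]] (in m×m block form), together with the zero and identity matrix, form a set closed under multiplication and symplectic transpose, and the map sending the class of Xᵢⱼ to (i,j), identity to 1 and zero to 0 is a multiplicative and involution-preserving surjection onto the twisted Brandt monoid TB (the 6-element monoid with elements (1,1),(1,2),(2,1),(2,2),0,1 where (i,j)(k,l) = (i,l) if (j,k) ∈ {(1,2),(2,1)} and 0 otherwise, and (i,j)* = (j,i)). -/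

import Mathlib

open Matrix

/-- The twisted Brandt monoid `TB`: elements `(i,j)` for `i, j ∈ {1,2}`,
a zero and an identity. -/
inductive TB : Type
  | pair : Fin 2 → Fin 2 → TB
  | zero : TB
  | one : TB
  deriving DecidableEq

/-- Multiplication in the twisted Brandt monoid:
`(i,j)(k,l) = (i,l)` if `(j,k) ∈ {(1,2),(2,1)}` and `0` otherwise. -/
def TB.mul : TB → TB → TB
  | TB.pair i j, TB.pair k l => if j ≠ k then TB.pair i l else TB.zero
  | TB.zero, _ => TB.zero
  | _, TB.zero => TB.zero
  | TB.one, t => t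
  | t, TB.one => t

/-- Involution of the twisted Brandt monoid: `(i,j)* = (j,i)`, `0* = 0`, `1* = 1`. -/
def TB.star : TB → TB
  | TB.pair i j => TB.pair j i
  | TB.zero => TB.zero
  | TB.one => TB.one

/-- The symplectic transpose of a `2m × 2m` matrix written in `m × m` blocks. -/
def sympTranspose {K : Type*} [Field K] {m : ℕ}
    (X : Matrix (Fin m ⊕ Fin m) (Fin m ⊕ Fin m) K) :
    Matrix (Fin m ⊕ Fin m) (Fin m ⊕ Fin m) K :=
  Matrix.fromBlocks (X.toBlocks₂₂)ᵀ (-(X.toBlocks₁₂)ᵀ)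
    (-(X.toBlocks₂₁)ᵀ) (X.toBlocks₁₁)ᵀ

/-- The block matrices `Xᵢⱼ`. -/
def Xmat (K : Type*) [Field K] (m : ℕ) :
    Fin 2 → Fin 2 → Matrix (Fin m ⊕ Fin m) (Fin m ⊕ Fin m) K :=
  fun i j =>
    if i = 0 then
      (if j = 0 then Matrix.fromBlocks 0 1 0 0 else Matrix.fromBlocks 1 0 0 0)
    else
      (if j = 0 then Matrix.fromBlocks 0 0 0 1 else Matrix.fromBlocks 0 0 1 0)

/-- The class of `2m × 2m` matrices associated to an element of `TB`:
`(i,j) ↦ {± Xᵢⱼ}`, `0 ↦ {0}`, `1 ↦ {1}`. -/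
def tbClass (K : Type*) [Field K] (m : ℕ) :
    TB → Set (Matrix (Fin m ⊕ Fin m) (Fin m ⊕ Fin m) K)
  | TB.pair i j => {Xmat K m i j, -Xmat K m i j}
  | TB.zero => {0}
  | TB.one => {1}

@[simp] lemma TB.mul_one (s : TB) : TB.mul s TB.one = s := by
  cases s <;> rfl

@[simp] lemma TB.mul_zero (s : TB) : TB.mul s TB.zero = TB.zero := by
  cases s <;> rfl

@[simp] lemma TB.one_mul (s : TB) : TB.mul TB.one s = s := by
  cases s <;> rfl

@[simp] lemma TB.zero_mul (s : TB) : TB.mul TB.zero s = TB.zero := rfl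

lemma TB.pair_mul_pair (i j k l : Fin 2) :
    TB.mul (TB.pair i j) (TB.pair k l) = if j ≠ k then TB.pair i l else TB.zero := rfl

section Matrices

variable {K : Type*} [Field K] {m : ℕ}

lemma Xmat_mul_Xmat (i j k l : Fin 2) :
    Xmat K m i j * Xmat K m k l = if j ≠ k then Xmat K m i l else 0 := by
  fin_cases i <;> fin_cases j <;> fin_cases k <;> fin_cases l <;>
    simp [Xmat, fromBlocks_multiply]

lemma sympTranspose_fromBlocks (A B C D : Matrix (Fin m) (Fin m) K) :
    sympTranspose (fromBlocks A B C D) = fromBlocks Dᵀ (-Bᵀ) (-Cᵀ) Aᵀ := by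
  simp [sympTranspose]

lemma sympTranspose_neg (X : Matrix (Fin m ⊕ Fin m) (Fin m ⊕ Fin m) K) :
    sympTranspose (-X) = -sympTranspose X := by
  rw [← fromBlocks_toBlocks X]
  simp only [fromBlocks_neg, sympTranspose_fromBlocks, transpose_neg, neg_neg]

lemma sympTranspose_zero : sympTranspose (0 : Matrix (Fin m ⊕ Fin m) (Fin m ⊕ Fin m) K) = 0 := by
  rw [← fromBlocks_zero, sympTranspose_fromBlocks]
  simp

lemma sympTranspose_one : sympTranspose (1 : Matrix (Fin m ⊕ Fin m) (Fin m ⊕ Fin m) K) = 1 := by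
  rw [← fromBlocks_one, sympTranspose_fromBlocks]
  simp

-- The sign on the diagonal classes `X₁₁`, `X₂₂` is why the classes are taken up to `±`.
lemma sympTranspose_Xmat (i j : Fin 2) :
    sympTranspose (Xmat K m i j) = if i = j then -Xmat K m j i else Xmat K m j i := by
  fin_cases i <;> fin_cases j <;> simp [Xmat, sympTranspose_fromBlocks, fromBlocks_neg]

lemma tbClass_nonempty (s : TB) : (tbClass K m s).Nonempty := by
  cases s <;> simp [tbClass]

lemma mul_mem_tbClass {s t : TB} {X Y : Matrix (Fin m ⊕ Fin m) (Fin m ⊕ Fin m) K}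
    (hX : X ∈ tbClass K m s) (hY : Y ∈ tbClass K m t) :
    X * Y ∈ tbClass K m (TB.mul s t) := by
  cases s with
  | zero => obtain rfl := hX; simp [tbClass]
  | one => obtain rfl := hX; simpa using hY
  | pair i j =>
    cases t with
    | zero => obtain rfl := hY; simp [tbClass]
    | one => obtain rfl := hY; simpa using hX
    | pair k l =>
      rcases hX with rfl | rfl <;> rcases hY with rfl | rfl <;>
        by_cases hjk : j ≠ k <;> simp [TB.pair_mul_pair, Xmat_mul_Xmat, hjk, tbClass]

lemma sympTranspose_mem_tbClass {s : TB} {X : Matrix (Fin m ⊕ Fin m) (Fin m ⊕ Fin m) K}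
    (hX : X ∈ tbClass K m s) : sympTranspose X ∈ tbClass K m (TB.star s) := by
  cases s with
  | zero => obtain rfl := hX; simp [tbClass, TB.star, sympTranspose_zero]
  | one => obtain rfl := hX; simp [tbClass, TB.star, sympTranspose_one]
  | pair i j =>
    rcases hX with rfl | rfl <;> by_cases hij : i = j <;>
      simp [tbClass, TB.star, sympTranspose_neg, sympTranspose_Xmat, hij]

end Matrices

theorem twisted_brandt_image_of_symplectic_general {K : Type*} [Field K] {m : ℕ} :
    (∀ s : TB, (tbClass K m s).Nonempty) ∧
    (∀ s t : TB, ∀ X ∈ tbClass K m s, ∀ Y ∈ tbClass K m t,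
        X * Y ∈ tbClass K m (TB.mul s t)) ∧
    (∀ s : TB, ∀ X ∈ tbClass K m s, sympTranspose X ∈ tbClass K m (TB.star s)) :=
  ⟨tbClass_nonempty, fun _ _ _ hX _ hY => mul_mem_tbClass hX hY,
    fun _ _ hX => sympTranspose_mem_tbClass hX⟩

/-- Over a field of characteristic `≠ 2`, the matrices `± Xᵢⱼ` together with the
zero and identity matrices form a set closed under multiplication and symplectic
transpose, and the class map onto the twisted Brandt monoid is a multiplicative,
involution-preserving surjection. -/
theorem twisted_brandt_image_of_symplectic {K : Type*} [Field K]
    (h2 : (2 : K) ≠ 0) {m : ℕ} (hm : 1 ≤ m) :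
    (∀ s : TB, (tbClass K m s).Nonempty) ∧
    (∀ s t : TB, ∀ X ∈ tbClass K m s, ∀ Y ∈ tbClass K m t,
        X * Y ∈ tbClass K m (TB.mul s t)) ∧
    (∀ s : TB, ∀ X ∈ tbClass K m s, sympTranspose X ∈ tbClass K m (TB.star s)) :=
  twisted_brandt_image_of_symplectic_general
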